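/- arXiv:1005.1564 — 2 statements merged into one kernel-verified Lean document; each statement's English description precedes it below -/
import Mathlib

section
/- Let a ≥ 0 and c > 0 be real numbers and m a natural number. The function f(t) = exp(−a·t)·(1 − exp(−c·t))^m is log-concave on (0, ∞): for all t₁, t₂ > 0 and all λ ∈ [0,1], f(λ·t₁ + (1−λ)·t₂) ≥ f(t₁)^λ · f(t₂)^{1−λ}. -/
/-!
Write `f(t) = exp(-a t) · g(t) ^ m` with `g(t) = 1 - exp(-c t)`. The first factor is the
exponential of a linear function, so it is log-concave (with equality). The function `g` is
concave, as `exp` is convex, and it is positive for `t > 0`; by weighted AM-GM a nonnegative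
concave function is log-concave. Log-concavity of nonnegative functions is preserved under
natural powers and products.
-/

open Real Set

variable {E : Type*} [AddCommMonoid E] [Module ℝ E]

/-- Positivity of `f` is not required here; since `Real.rpow` has junk values at negative
bases, the closure lemmas assume `0 ≤ f` on `s` instead. -/
def LogConcaveOn (s : Set E) (f : E → ℝ) : Prop :=
  Convex ℝ s ∧ ∀ ⦃x⦄, x ∈ s → ∀ ⦃y⦄, y ∈ s → ∀ ⦃a b : ℝ⦄, 0 ≤ a → 0 ≤ b → a + b = 1 →
    f x ^ a * f y ^ b ≤ f (a • x + b • y)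

theorem ConcaveOn.logConcaveOn_exp {s : Set E} {g : E → ℝ} (hg : ConcaveOn ℝ s g) :
    LogConcaveOn s (fun x ↦ exp (g x)) := by
  refine ⟨hg.1, fun x hx y hy a b ha hb hab ↦ ?_⟩
  rw [← exp_mul, ← exp_mul, ← exp_add, exp_le_exp, mul_comm (g x), mul_comm (g y)]
  exact hg.2 hx hy ha hb hab

theorem ConcaveOn.logConcaveOn {s : Set E} {f : E → ℝ} (hf : ConcaveOn ℝ s f)
    (hf₀ : ∀ x ∈ s, 0 ≤ f x) : LogConcaveOn s f :=
  ⟨hf.1, fun x hx y hy _ _ ha hb hab ↦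
    (geom_mean_le_arith_mean2_weighted ha hb (hf₀ x hx) (hf₀ y hy) hab).trans
      (hf.2 hx hy ha hb hab)⟩

theorem LogConcaveOn.mul {s : Set E} {f g : E → ℝ} (hf : LogConcaveOn s f)
    (hg : LogConcaveOn s g) (hf₀ : ∀ x ∈ s, 0 ≤ f x) (hg₀ : ∀ x ∈ s, 0 ≤ g x) :
    LogConcaveOn s (fun x ↦ f x * g x) := by
  refine ⟨hf.1, fun x hx y hy a b ha hb hab ↦ ?_⟩
  rw [mul_rpow (hf₀ x hx) (hg₀ x hx), mul_rpow (hf₀ y hy) (hg₀ y hy),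
    mul_mul_mul_comm]
  exact mul_le_mul (hf.2 hx hy ha hb hab) (hg.2 hx hy ha hb hab)
    (mul_nonneg (rpow_nonneg (hg₀ x hx) a) (rpow_nonneg (hg₀ y hy) b))
    (hf₀ _ (hf.1 hx hy ha hb hab))

theorem LogConcaveOn.pow {s : Set E} {f : E → ℝ} (hf : LogConcaveOn s f)
    (hf₀ : ∀ x ∈ s, 0 ≤ f x) (m : ℕ) : LogConcaveOn s (fun x ↦ f x ^ m) := by
  refine ⟨hf.1, fun x hx y hy a b ha hb hab ↦ ?_⟩
  rw [← rpow_pow_comm (hf₀ x hx), ← rpow_pow_comm (hf₀ y hy), ← mul_pow]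
  exact pow_le_pow_left₀ (mul_nonneg (rpow_nonneg (hf₀ x hx) a) (rpow_nonneg (hf₀ y hy) b))
    (hf.2 hx hy ha hb hab) m

theorem concaveOn_one_sub_exp_neg_mul (c : ℝ) :
    ConcaveOn ℝ univ (fun t : ℝ ↦ 1 - exp (-c * t)) := by
  refine ⟨convex_univ, fun x _ y _ a b ha hb hab ↦ ?_⟩
  have hexp := convexOn_exp.2 (mem_univ (-c * x)) (mem_univ (-c * y)) ha hb hab
  simp only [smul_eq_mul] at hexp ⊢
  rw [show -c * (a * x + b * y) = a * (-c * x) + b * (-c * y) by ring]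
  linarith

theorem log_concave_expected_degree_general (a c : ℝ) (hc : 0 < c) (m : ℕ)
    (t₁ t₂ l : ℝ) (ht₁ : 0 < t₁) (ht₂ : 0 < t₂) (hl : l ∈ Set.Icc (0 : ℝ) 1) :
    Real.exp (-a * (l * t₁ + (1 - l) * t₂)) *
        (1 - Real.exp (-c * (l * t₁ + (1 - l) * t₂))) ^ m ≥
      (Real.exp (-a * t₁) * (1 - Real.exp (-c * t₁)) ^ m) ^ l *
        (Real.exp (-a * t₂) * (1 - Real.exp (-c * t₂)) ^ m) ^ (1 - l) := by
  have hg₀ : ∀ t ∈ Ioi (0 : ℝ), 0 ≤ 1 - exp (-c * t) := fun t ht ↦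
    sub_nonneg.2 (exp_le_one_iff.2 (by nlinarith [mem_Ioi.1 ht]))
  have hexp : LogConcaveOn (Ioi (0 : ℝ)) (fun t ↦ exp (-a * t)) :=
    ConcaveOn.logConcaveOn_exp (((-a) • LinearMap.id).concaveOn (convex_Ioi 0))
  have hg : LogConcaveOn (Ioi (0 : ℝ)) (fun t ↦ 1 - exp (-c * t)) :=
    ((concaveOn_one_sub_exp_neg_mul c).subset (subset_univ _) (convex_Ioi 0)).logConcaveOn hg₀
  have hf := hexp.mul (hg.pow hg₀ m) (fun t _ ↦ (exp_pos _).le)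
    (fun t ht ↦ pow_nonneg (hg₀ t ht) m)
  exact hf.2 ht₁ ht₂ hl.1 (sub_nonneg.2 hl.2) (add_sub_cancel l 1)

/-- The function `t ↦ exp(-a t)(1 - exp(-c t))^m` is log-concave on `(0,∞)`. -/
theorem log_concave_expected_degree (a c : ℝ) (ha : 0 ≤ a) (hc : 0 < c) (m : ℕ)
    (t₁ t₂ l : ℝ) (ht₁ : 0 < t₁) (ht₂ : 0 < t₂) (hl : l ∈ Set.Icc (0 : ℝ) 1) :
    Real.exp (-a * (l * t₁ + (1 - l) * t₂)) *
        (1 - Real.exp (-c * (l * t₁ + (1 - l) * t₂))) ^ m ≥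
      (Real.exp (-a * t₁) * (1 - Real.exp (-c * t₁)) ^ m) ^ l *
        (Real.exp (-a * t₂) * (1 - Real.exp (-c * t₂)) ^ m) ^ (1 - l) :=
  log_concave_expected_degree_general a c hc m t₁ t₂ l ht₁ ht₂ hl
end

section
/- Let r ≥ 3 and k ≥ 1 be integers. Consider the infinite rooted tree whose root has exactly r children and every non-root vertex has exactly r−1 children; concretely, its vertex set consists of the root together with all pairs (i, w) where i ∈ {1,…,r} and w is a finite word over {1,…,r−1}, the parent of (i, empty word) being the root and the parent of (i, w·j) being (i, w). Then the number of k-element sets of vertices that contain the root and are closed under taking parents equals (r/((r−2)k+2))·C((r−1)k, k−1). -/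
lemma card_root_case {α β : Type*} [DecidableEq α] [DecidableEq β]
    (root : α) (f : α → β) (g : β → α)
    (hfg : ∀ b, f (g b) = b) (hgf : ∀ a, a ≠ root → g (f a) = a)
    (hgroot : ∀ b, g b ≠ root)
    (P : Finset α → Prop) (Q : Finset β → Prop)
    (hPQ : ∀ S, P S → root ∈ S → Q ((S.erase root).image f))
    (hQP : ∀ T, Q T → P (insert root (T.image g)))
    (k : ℕ) :
    Nat.card {S : Finset α // S.card = k + 1 ∧ root ∈ S ∧ P S}
      = Nat.card {T : Finset β // T.card = k ∧ Q T} := by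
  have hginj : Function.Injective g := fun a b h => by
    have := congrArg f h; rwa [hfg, hfg] at this
  apply Nat.card_congr
  refine ⟨fun ⟨S, hc, hr, hP⟩ => ⟨(S.erase root).image f, ?_, hPQ S hP hr⟩,
          fun ⟨T, hc, hQ⟩ => ⟨insert root (T.image g), ?_, Finset.mem_insert_self _ _, hQP T hQ⟩,
          ?_, ?_⟩
  · rw [Finset.card_image_of_injOn, Finset.card_erase_of_mem hr, hc]
    · omega
    intro a ha b hb hab
    rw [Finset.mem_coe, Finset.mem_erase] at ha hb
    rw [← hgf a ha.1, hab, hgf b hb.1]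
  · rw [Finset.card_insert_of_notMem, Finset.card_image_of_injective _ hginj, hc]
    simp only [Finset.mem_image, not_exists]
    rintro x ⟨hx, h⟩
    exact hgroot x h
  · rintro ⟨S, hc, hr, hP⟩
    ext1
    simp only
    rw [Finset.image_image]
    have : (S.erase root).image (g ∘ f) = S.erase root := by
      rw [Finset.image_congr (g := id), Finset.image_id]
      intro a ha
      rw [Finset.mem_coe, Finset.mem_erase] at ha
      exact hgf a ha.1
    rw [this, Finset.insert_erase hr]
  · rintro ⟨T, hc, hQ⟩
    ext1
    simp only
    rw [Finset.erase_insert, Finset.image_image]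
    · rw [Finset.image_congr (g := id), Finset.image_id]
      intro a _
      exact hfg a
    · simp only [Finset.mem_image, not_exists]
      rintro x ⟨hx, h⟩
      exact hgroot x h

lemma card_noroot_case {α β : Type*} [DecidableEq α] [DecidableEq β]
    (root : α) (f : α → β) (g : β → α) (R : α → Prop)
    (hfg : ∀ b, f (g b) = b) (hgf : ∀ a, R a → g (f a) = a)
    (hgroot : ∀ b, g b ≠ root)
    (P : Finset α → Prop) (Q : Finset β → Prop)
    (hR : ∀ S, P S → root ∉ S → ∀ a ∈ S, R a)
    (hPQ : ∀ S, P S → root ∉ S → Q (S.image f))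
    (hQP : ∀ T, Q T → P (T.image g))
    (k : ℕ) :
    Nat.card {S : Finset α // S.card = k ∧ root ∉ S ∧ P S}
      = Nat.card {T : Finset β // T.card = k ∧ Q T} := by
  have hginj : Function.Injective g := fun a b h => by
    have := congrArg f h; rwa [hfg, hfg] at this
  apply Nat.card_congr
  refine ⟨fun ⟨S, hc, hr, hP⟩ => ⟨S.image f, ?_, hPQ S hP hr⟩,
          fun ⟨T, hc, hQ⟩ => ⟨T.image g, ?_, ?_, hQP T hQ⟩,
          ?_, ?_⟩
  · rw [Finset.card_image_of_injOn, hc]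
    intro a ha b hb hab
    rw [Finset.mem_coe] at ha hb
    rw [← hgf a (hR S hP hr a ha), hab, hgf b (hR S hP hr b hb)]
  · rw [Finset.card_image_of_injective _ hginj, hc]
  · simp only [Finset.mem_image, not_exists]
    rintro x ⟨hx, h⟩
    exact hgroot x h
  · rintro ⟨S, hc, hr, hP⟩
    ext1
    simp only
    rw [Finset.image_image, Finset.image_congr (g := id), Finset.image_id]
    intro a ha
    rw [Finset.mem_coe] at ha
    exact hgf a (hR S hP hr a ha)
  · rintro ⟨T, hc, hQ⟩
    ext1
    simp only
    rw [Finset.image_image, Finset.image_congr (g := id), Finset.image_id]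
    intro a _
    exact hfg a

section Forest
variable {p : ℕ}

abbrev FVtx (p m : ℕ) := Fin m × List (Fin p)

def FClosed {m : ℕ} (S : Finset (FVtx p m)) : Prop :=
  ∀ x ∈ S, x.2 ≠ [] → (x.1, x.2.dropLast) ∈ S

lemma take_mem {m : ℕ} {S : Finset (FVtx p m)} (hS : FClosed S)
    {i : Fin m} {w : List (Fin p)} (hw : (i, w) ∈ S) (t : ℕ) :
    (i, w.take t) ∈ S := by
  induction w using List.reverseRecOn generalizing t with
  | nil => simpa using hw
  | append_singleton w j ih =>
    rcases le_or_gt (w.length + 1) t with h | h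
    · rwa [List.take_of_length_le (by simpa using h)]
    · have hmem : (i, w) ∈ S := by
        have := hS _ hw (by simp)
        simpa using this
      have := ih hmem t
      rwa [List.take_append_of_le_length (by omega)]

lemma length_lt_card {m : ℕ} {S : Finset (FVtx p m)} (hS : FClosed S)
    {i : Fin m} {w : List (Fin p)} (hw : (i, w) ∈ S) : w.length < S.card := by
  have hsub : (Finset.range (w.length + 1)).image (fun t => ((i, w.take t) : FVtx p m)) ⊆ S := by
    intro x hx
    simp only [Finset.mem_image, Finset.mem_range] at hx
    obtain ⟨t, _, rfl⟩ := hx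
    exact take_mem hS hw t
  have hcard : (Finset.range (w.length + 1)).card ≤ S.card := by
    rw [← Finset.card_image_of_injOn (f := fun t => ((i, w.take t) : FVtx p m)) ?_]
    · exact Finset.card_le_card hsub
    · intro a ha b hb hab
      simp only [Finset.coe_range, Set.mem_Iio] at ha hb
      have h2 : w.take a = w.take b := congrArg Prod.snd hab
      have : (w.take a).length = (w.take b).length := by rw [h2]
      simp only [List.length_take] at this
      omega
  simp only [Finset.card_range] at hcard
  omega

lemma closed_finite (m k : ℕ) :
    {S : Finset (FVtx p m) | S.card = k ∧ FClosed S}.Finite := by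
  have hW : {l : List (Fin p) | l.length ≤ k}.Finite := List.finite_length_le _ k
  set V : Finset (FVtx p m) := Finset.univ ×ˢ hW.toFinset with hV
  apply Set.Finite.subset V.powerset.finite_toSet
  rintro S ⟨hcard, hcl⟩
  simp only [Finset.coe_powerset, Set.mem_preimage, Set.mem_powerset_iff, Finset.coe_subset,
    Finset.mem_coe]
  intro x hx
  rw [hV, Finset.mem_product]
  refine ⟨Finset.mem_univ _, ?_⟩
  rw [Set.Finite.mem_toFinset]
  have := length_lt_card hcl (i := x.1) (w := x.2) (by simpa using hx)
  simp only [Set.mem_setOf_eq]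
  omega


def fB (p m : ℕ) (hp : 1 ≤ p) : FVtx p (m + 1) → FVtx p (m + p)
  | (i, w) =>
    if h : (i : ℕ) < m then (⟨i, by omega⟩, w)
    else
      match w with
      | [] => (⟨m, by omega⟩, [])
      | j :: w' => (⟨m + (j : ℕ), by have := j.isLt; omega⟩, w')

def gB (p m : ℕ) : FVtx p (m + p) → FVtx p (m + 1)
  | (a, w) =>
    if h : (a : ℕ) < m then (⟨a, by omega⟩, w)
    else (Fin.last m, (⟨(a : ℕ) - m, by have := a.isLt; omega⟩ : Fin p) :: w)

lemma fB_gB (hp : 1 ≤ p) (m : ℕ) (b : FVtx p (m + p)) : fB p m hp (gB p m b) = b := by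
  obtain ⟨a, w⟩ := b
  by_cases h : (a : ℕ) < m
  · simp [fB, gB, h]
  · simp only [gB, dif_neg h, fB, Fin.val_last, lt_irrefl, dif_neg (lt_irrefl m).elim]
    rw [dif_neg (by simp)]
    ext
    · simp; omega
    · simp

lemma gB_fB (hp : 1 ≤ p) (m : ℕ) (a : FVtx p (m + 1))
    (ha : a ≠ (Fin.last m, ([] : List (Fin p)))) : gB p m (fB p m hp a) = a := by
  obtain ⟨i, w⟩ := a
  by_cases h : (i : ℕ) < m
  · simp [fB, gB, h]
  · have hi : i = Fin.last m := by
      ext; have := i.isLt; simp [Fin.val_last]; omega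
    subst hi
    match w with
    | [] => exact absurd rfl ha
    | j :: w' =>
      simp only [fB, dif_neg h, gB]
      rw [dif_neg (by omega)]
      simp [Fin.ext_iff]

lemma gB_ne_root (m : ℕ) (b : FVtx p (m + p)) :
    gB p m b ≠ (Fin.last m, ([] : List (Fin p))) := by
  obtain ⟨a, w⟩ := b
  by_cases h : (a : ℕ) < m
  · simp only [gB, dif_neg, dif_pos h]
    intro hc
    have := congrArg (fun x => (x.1 : ℕ)) hc
    simp [Fin.val_last] at this
    omega
  · simp only [gB, dif_neg h]
    intro hc
    have := congrArg Prod.snd hc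
    simp at this

lemma mem_of_not_lt {m : ℕ} {i : Fin (m+1)} (h : ¬ (i : ℕ) < m) : i = Fin.last m := by
  ext; have := i.isLt; simp [Fin.val_last]; omega

lemma fB_closed (hp : 1 ≤ p) (m : ℕ) (S : Finset (FVtx p (m+1)))
    (hS : FClosed S) (hr : (Fin.last m, ([] : List (Fin p))) ∈ S) :
    FClosed ((S.erase (Fin.last m, ([] : List (Fin p)))).image (fB p m hp)) := by
  rintro ⟨b, w⟩ hbw hw
  simp only [Finset.mem_image, Finset.mem_erase] at hbw ⊢
  obtain ⟨⟨i, u⟩, ⟨hne, hmem⟩, heq⟩ := hbw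
  by_cases h : (i : ℕ) < m
  · simp only [fB, dif_pos h] at heq
    obtain ⟨h1, h2⟩ := Prod.ext_iff.1 heq
    simp only at h1 h2
    subst h2
    refine ⟨(i, u.dropLast), ⟨?_, hS _ hmem hw⟩, ?_⟩
    · intro hc
      obtain ⟨hc1, _⟩ := Prod.ext_iff.1 hc
      have := congrArg Fin.val hc1
      simp [Fin.val_last] at this
      omega
    · simp only [fB, dif_pos h]
      exact Prod.ext_iff.2 ⟨h1, rfl⟩
  · have hi := mem_of_not_lt h
    subst hi
    match u, hne with
    | j :: u', _ =>
      simp only [fB, dif_neg h] at heq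
      obtain ⟨h1, h2⟩ := Prod.ext_iff.1 heq
      simp only at h1 h2
      subst h2
      have hu' : u' ≠ [] := hw
      have hpar : (Fin.last m, (j :: u').dropLast) ∈ S := hS _ hmem (by simp)
      rw [List.dropLast_cons_of_ne_nil hu'] at hpar
      refine ⟨(Fin.last m, j :: u'.dropLast), ⟨by simp [hu'], hpar⟩, ?_⟩
      simp only [fB, dif_neg h]
      exact Prod.ext_iff.2 ⟨h1, rfl⟩

lemma gB_closed (hp : 1 ≤ p) (m : ℕ) (T : Finset (FVtx p (m+p)))
    (hT : FClosed T) :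
    FClosed (insert (Fin.last m, ([] : List (Fin p))) (T.image (gB p m))) := by
  rintro ⟨i, w⟩ hiw hw
  simp only [Finset.mem_insert, Finset.mem_image] at hiw ⊢
  rcases hiw with hc | ⟨⟨a, u⟩, hmem, heq⟩
  · exact absurd (congrArg Prod.snd hc) hw
  · by_cases h : (a : ℕ) < m
    · simp only [gB, dif_pos h] at heq
      obtain ⟨h1, h2⟩ := Prod.ext_iff.1 heq
      simp only at h1 h2
      subst h2
      refine Or.inr ⟨(a, u.dropLast), hT _ hmem hw, ?_⟩
      simp only [gB, dif_pos h]
      exact Prod.ext_iff.2 ⟨h1, rfl⟩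
    · simp only [gB, dif_neg h] at heq
      obtain ⟨h1, h2⟩ := Prod.ext_iff.1 heq
      simp only at h1 h2
      subst h1
      subst h2
      rcases u with - | ⟨x, u'⟩
      · exact Or.inl (by simp)
      · refine Or.inr ⟨(a, (x :: u').dropLast), hT _ hmem (by simp), ?_⟩
        simp only [gB, dif_neg h]
        rw [List.dropLast_cons_of_ne_nil (x := (⟨(a:ℕ)-m, by have := a.isLt; omega⟩ : Fin p)) (l := x :: u') (by simp)]

def fA (p m : ℕ) (hm : 1 ≤ m) : FVtx p (m + 1) → FVtx p m
  | (i, w) => if h : (i : ℕ) < m then (⟨i, h⟩, w) else (⟨0, hm⟩, w)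

def gA (p m : ℕ) : FVtx p m → FVtx p (m + 1)
  | (a, w) => (⟨a, by have := a.isLt; omega⟩, w)

lemma fA_gA (hm : 1 ≤ m) (b : FVtx p m) : fA p m hm (gA p m b) = b := by
  obtain ⟨a, w⟩ := b
  simp only [gA, fA, a.isLt, dif_pos]
  exact dif_pos a.isLt

lemma gA_fA (hm : 1 ≤ m) (a : FVtx p (m + 1)) (ha : (a.1 : ℕ) < m) :
    gA p m (fA p m hm a) = a := by
  obtain ⟨i, w⟩ := a
  simp only [fA, dif_pos ha, gA]

lemma gA_ne_root (m : ℕ) (b : FVtx p m) :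
    gA p m b ≠ (Fin.last m, ([] : List (Fin p))) := by
  obtain ⟨a, w⟩ := b
  simp only [gA]
  intro hc
  have := congrArg (fun x => (x.1 : ℕ)) hc
  simp [Fin.val_last] at this
  omega

lemma first_lt {m : ℕ} {S : Finset (FVtx p (m+1))} (hS : FClosed S)
    (hroot : (Fin.last m, ([] : List (Fin p))) ∉ S) {a : FVtx p (m+1)} (ha : a ∈ S) :
    (a.1 : ℕ) < m := by
  obtain ⟨i, w⟩ := a
  have h0 : (i, ([] : List (Fin p))) ∈ S := by
    have := take_mem hS ha 0
    simpa using this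
  by_contra h
  have : i = Fin.last m := mem_of_not_lt h
  exact hroot (this ▸ h0)

lemma fA_closed (hm : 1 ≤ m) (S : Finset (FVtx p (m+1)))
    (hS : FClosed S) (hroot : (Fin.last m, ([] : List (Fin p))) ∉ S) :
    FClosed (S.image (fA p m hm)) := by
  rintro ⟨b, w⟩ hbw hw
  simp only [Finset.mem_image] at hbw ⊢
  obtain ⟨⟨i, u⟩, hmem, heq⟩ := hbw
  have hlt : (i : ℕ) < m := first_lt hS hroot hmem
  simp only [fA, dif_pos hlt] at heq
  obtain ⟨h1, h2⟩ := Prod.ext_iff.1 heq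
  simp only at h1 h2
  subst h2
  refine ⟨(i, u.dropLast), hS _ hmem hw, ?_⟩
  simp only [fA, dif_pos hlt]
  exact Prod.ext_iff.2 ⟨h1, rfl⟩

lemma gA_closed (m : ℕ) (T : Finset (FVtx p m)) (hT : FClosed T) :
    FClosed (T.image (gA p m)) := by
  rintro ⟨i, w⟩ hiw hw
  simp only [Finset.mem_image] at hiw ⊢
  obtain ⟨⟨a, u⟩, hmem, heq⟩ := hiw
  simp only [gA] at heq
  obtain ⟨h1, h2⟩ := Prod.ext_iff.1 heq
  simp only at h1 h2
  subst h2
  exact ⟨(a, u.dropLast), hT _ hmem hw, Prod.ext_iff.2 ⟨h1, rfl⟩⟩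

noncomputable def fc (p m k : ℕ) : ℕ :=
  Nat.card {S : Finset (FVtx p m) // S.card = k ∧ FClosed S}

lemma fc_finite (m k : ℕ) : Finite {S : Finset (FVtx p m) // S.card = k ∧ FClosed S} :=
  (closed_finite m k).to_subtype

lemma fc_zero (m : ℕ) : fc p m 0 = 1 := by
  rw [fc]
  have : Unique {S : Finset (FVtx p m) // S.card = 0 ∧ FClosed S} := by
    refine ⟨⟨⟨∅, by simp, by intro x hx; simp at hx⟩⟩, ?_⟩
    rintro ⟨S, hc, _⟩
    ext1
    simpa [Finset.card_eq_zero] using hc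
  exact Nat.card_unique

lemma fc_empty (k : ℕ) (hk : 1 ≤ k) : fc p 0 k = 0 := by
  rw [fc]
  have : IsEmpty {S : Finset (FVtx p 0) // S.card = k ∧ FClosed S} := by
    constructor
    rintro ⟨S, hc, -⟩
    have : S.Nonempty := Finset.card_pos.1 (by omega)
    obtain ⟨⟨i, w⟩, -⟩ := this
    exact i.elim0
  simp [Nat.card_eq_zero]

lemma card_split {γ : Type*} (Φ A : γ → Prop) [∀ x, Decidable (A x)]
    [Finite {x // Φ x ∧ A x}] [Finite {x // Φ x ∧ ¬ A x}] :
    Nat.card {x // Φ x} =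
      Nat.card {x // Φ x ∧ A x} + Nat.card {x // Φ x ∧ ¬ A x} := by
  rw [← Nat.card_sum]
  apply Nat.card_congr
  refine ⟨fun ⟨x, h⟩ => if ha : A x then .inl ⟨x, h, ha⟩ else .inr ⟨x, h, ha⟩,
          Sum.elim (fun ⟨x, h⟩ => ⟨x, h.1⟩) (fun ⟨x, h⟩ => ⟨x, h.1⟩), ?_, ?_⟩
  · rintro ⟨x, h⟩
    by_cases ha : A x <;> simp [ha]
  · rintro (⟨x, h⟩ | ⟨x, h⟩)
    · simp [h.2]
    · simp [h.2]

lemma fc_rec (hp : 1 ≤ p) (m k : ℕ) :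
    fc p (m + 1) (k + 1) = fc p m (k + 1) + fc p (m + p) k := by
  classical
  set root : FVtx p (m + 1) := (Fin.last m, ([] : List (Fin p))) with hroot
  haveI := fc_finite (p := p) (m+1) (k+1)
  haveI h1 : Finite {S : Finset (FVtx p (m+1)) //
      (S.card = k + 1 ∧ FClosed S) ∧ root ∈ S} :=
    Finite.of_injective
      (fun x => (⟨x.1, x.2.1⟩ : {S : Finset (FVtx p (m+1)) // S.card = k + 1 ∧ FClosed S}))
      (by rintro ⟨a, _⟩ ⟨b, _⟩ h; simpa using congrArg Subtype.val h)
  haveI h2 : Finite {S : Finset (FVtx p (m+1)) //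
      (S.card = k + 1 ∧ FClosed S) ∧ root ∉ S} :=
    Finite.of_injective
      (fun x => (⟨x.1, x.2.1⟩ : {S : Finset (FVtx p (m+1)) // S.card = k + 1 ∧ FClosed S}))
      (by rintro ⟨a, _⟩ ⟨b, _⟩ h; simpa using congrArg Subtype.val h)
  rw [fc, card_split (fun S => S.card = k + 1 ∧ FClosed S) (fun S => root ∈ S)]
  rw [Nat.add_comm]
  congr 1
  · -- no-root part = fc p m (k+1)
    rw [fc]
    rcases Nat.eq_zero_or_pos m with rfl | hm
    · -- m = 0 : both sides are 0
      haveI : IsEmpty {x : Finset (FVtx p (0+1)) // (x.card = k + 1 ∧ FClosed x) ∧ root ∉ x} := by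
        constructor
        rintro ⟨S, ⟨hc, hcl⟩, hr⟩
        have h0 : 0 < S.card := by rw [hc]; exact Nat.succ_pos k
        obtain ⟨a, ha⟩ := Finset.card_pos.1 h0
        exact absurd (first_lt hcl hr ha) (by omega)
      haveI : IsEmpty {S : Finset (FVtx p 0) // S.card = k + 1 ∧ FClosed S} := by
        constructor
        rintro ⟨S, hc, -⟩
        obtain ⟨⟨i, w⟩, -⟩ := Finset.card_pos.1 (show 0 < S.card by omega)
        exact i.elim0
      simp [Nat.card_eq_zero]
    · have := card_noroot_case (α := FVtx p (m+1)) (β := FVtx p m) root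
        (fA p m hm) (gA p m) (fun a => (a.1 : ℕ) < m)
        (fA_gA hm) (fun a ha => gA_fA hm a ha) (gA_ne_root m)
        FClosed FClosed
        (fun S hP hr a ha => first_lt hP hr ha)
        (fun S hP hr => fA_closed hm S hP hr)
        (fun T hQ => gA_closed m T hQ) (k + 1)
      rw [← this]
      apply Nat.card_congr
      exact Equiv.subtypeEquivRight (by tauto)
  · -- root part = fc p (m+p) k
    rw [fc]
    have := card_root_case (α := FVtx p (m+1)) (β := FVtx p (m+p)) root
      (fB p m hp) (gB p m)
      (fB_gB hp m) (gB_fB hp m) (gB_ne_root m)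
      FClosed FClosed
      (fun S hP hr => fB_closed hp m S hP hr)
      (fun T hQ => gB_closed hp m T hQ) k
    rw [← this]
    apply Nat.card_congr
    exact Equiv.subtypeEquivRight (by tauto)

lemma alg_step (q kk mm nn A B C : ℝ) (h1 : nn = q * kk + mm + q)
    (hn0 : nn ≠ 0) (hn1 : nn + 1 ≠ 0)
    (hpas : C = B + A) (hrel : A * (kk + 1) = B * (nn - kk)) :
    (mm + 1) * C / (nn + 1) = mm * A / nn + (mm + q) * B / nn := by
  subst hpas
  subst h1
  field_simp
  linear_combination q * hrel

lemma fc_formula (hp : 1 ≤ p) : ∀ k m : ℕ, 1 ≤ m + k →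
    (fc p m k : ℝ) = m * ((p * k + m).choose k : ℝ) / (p * k + m) := by
  intro k
  induction k with
  | zero =>
    intro m hm
    rw [fc_zero]
    simp only [Nat.mul_zero, Nat.zero_add, Nat.choose_zero_right]
    have hm0 : (m : ℝ) ≠ 0 := Nat.cast_ne_zero.2 (by omega)
    push_cast
    field_simp
    ring
  | succ k ih =>
    intro m
    induction m with
    | zero =>
      intro _
      rw [fc_empty (k+1) (by omega)]
      push_cast
      simp
    | succ m ihm =>
      intro _
      rw [fc_rec hp m k]
      obtain ⟨N, hN⟩ : ∃ N, N = p * k + m + p := ⟨_, rfl⟩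
      have hNr : (N : ℝ) = p * k + m + p := by rw [hN]; push_cast; ring
      have e1 : p * (k+1) + m = N := by rw [hN]; ring
      have e2 : p * k + (m + p) = N := by rw [hN]; ring
      have e3 : p * (k+1) + (m+1) = N + 1 := by rw [hN]; ring
      have hd1 : (p : ℝ) * ((k+1 : ℕ) : ℝ) + (m : ℝ) = (N : ℝ) := by
        rw [hNr]; push_cast; ring
      have hd2 : (p : ℝ) * (k : ℝ) + ((m + p : ℕ) : ℝ) = (N : ℝ) := by
        rw [hNr]; push_cast; ring
      have hd3 : (p : ℝ) * ((k+1 : ℕ) : ℝ) + ((m+1 : ℕ) : ℝ) = (N : ℝ) + 1 := by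
        rw [hNr]; push_cast; ring
      have hA := ihm (by omega)
      have hB := ih (m + p) (by omega)
      rw [e1, hd1] at hA
      rw [e2, hd2] at hB
      rw [e3, hd3, Nat.cast_add, hA, hB]
      have hk_le : k ≤ N := by
        have h1k : k ≤ p * k := Nat.le_mul_of_pos_left k (by omega)
        omega
      have hn0 : (N : ℝ) ≠ 0 := Nat.cast_ne_zero.2 (by omega)
      have hn1 : (N : ℝ) + 1 ≠ 0 := by positivity
      have hpas : (((N+1).choose (k+1) : ℕ) : ℝ)
          = (N.choose k : ℝ) + (N.choose (k+1) : ℝ) := by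
        exact_mod_cast congrArg (Nat.cast (R := ℝ)) (Nat.choose_succ_succ N k)
      have hrel : (N.choose (k+1) : ℝ) * ((k : ℝ) + 1)
          = (N.choose k : ℝ) * ((N : ℝ) - (k : ℝ)) := by
        have h2 : ((N.choose (k+1) * (k+1) : ℕ) : ℝ) = ((N.choose k * (N - k) : ℕ) : ℝ) := by
          exact_mod_cast congrArg (Nat.cast (R := ℝ)) (Nat.choose_succ_right_eq N k)
        push_cast [Nat.cast_sub hk_le] at h2
        exact h2
      have hm1 : ((m+1 : ℕ) : ℝ) = (m : ℝ) + 1 := by push_cast; ring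
      have hmp : ((m+p : ℕ) : ℝ) = (m : ℝ) + (p : ℝ) := by push_cast; ring
      rw [hm1, hmp]
      exact (alg_step (p : ℝ) (k : ℝ) (m : ℝ) (N : ℝ) _ _ _ hNr hn0 hn1 hpas hrel).symm

end Forest



/-- The vertices of the infinite rooted tree whose root has `r` children and
every other vertex has `r-1` children: `none` is the root, and `some (i, w)`
is the vertex reached from the root by first moving to the `i`-th child and
then following the word `w` over the alphabet `{1,…,r-1}`. -/
def TreeVtx (r : ℕ) : Type := Option (Fin r × List (Fin (r - 1)))

/-- The parent map: the root is its own parent, the parent of `(i, ε)` is the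
root, and the parent of `(i, w·j)` is `(i, w)`. -/
def treeParent (r : ℕ) : TreeVtx r → TreeVtx r
  | none => none
  | some (i, w) => if w = [] then none else some (i, w.dropLast)


instance (r : ℕ) : DecidableEq (TreeVtx r) :=
  inferInstanceAs (DecidableEq (Option (Fin r × List (Fin (r - 1)))))

lemma tree_card (r j : ℕ) (hr : 3 ≤ r) :
    Nat.card {S : Finset (TreeVtx r) //
        S.card = j + 1 ∧ none ∈ S ∧ ∀ v ∈ S, treeParent r v ∈ S}
      = fc (r - 1) r j := by
  classical
  have h0r : 0 < r := by omega
  rw [fc]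
  exact card_root_case (α := TreeVtx r) (β := FVtx (r-1) r)
    (none) (fun v => v.getD (⟨0, h0r⟩, [])) (fun x => some x)
    (fun b => rfl)
    (fun a ha => by cases a with
      | none => exact absurd rfl ha
      | some x => rfl)
    (fun b => Option.some_ne_none _)
    (fun S => ∀ v ∈ S, treeParent r v ∈ S) FClosed
    (fun S hP hroot => by
      rintro ⟨i, w⟩ hiw hw
      obtain ⟨v, hv, heq⟩ := Finset.mem_image.1 hiw
      obtain ⟨hvne, hvmem⟩ := Finset.mem_erase.1 hv
      cases v with
      | none => exact absurd rfl hvne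
      | some x =>
        simp only [Option.getD_some] at heq
        subst heq
        have := hP _ hvmem
        rw [show treeParent r (some (i, w)) = some (i, w.dropLast) from if_neg hw] at this
        exact Finset.mem_image.2 ⟨some (i, w.dropLast), Finset.mem_erase.2 ⟨Option.some_ne_none _, this⟩, rfl⟩)
    (fun T hQ => by
      intro v hv
      rcases Finset.mem_insert.1 hv with rfl | hv'
      · exact Finset.mem_insert_self _ _
      obtain ⟨⟨i, w⟩, hmem, rfl⟩ := Finset.mem_image.1 hv'
      · by_cases hw : w = []
        · subst hw
          exact Finset.mem_insert_self _ _
        · rw [show treeParent r (some (i, w)) = some (i, w.dropLast) from if_neg hw]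
          exact Finset.mem_insert_of_mem (Finset.mem_image.2 ⟨(i, w.dropLast), hQ _ hmem hw, rfl⟩)) j

lemma habsR (n j : ℕ) :
    ((n : ℝ) + 1) * (n.choose j) + j * ((n+1).choose j)
      = ((n : ℝ) + 1) * ((n+1).choose j) := by
  cases j with
  | zero => simp
  | succ j' =>
    have h1 : (((n+1) * n.choose j' : ℕ) : ℝ) = (((n+1).choose (j'+1) * (j'+1) : ℕ) : ℝ) := by
      exact_mod_cast congrArg (Nat.cast (R := ℝ)) (Nat.add_one_mul_choose_eq n j')
    have h2 : (((n+1).choose (j'+1) : ℕ) : ℝ) = (n.choose j' : ℝ) + (n.choose (j'+1) : ℝ) := by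
      exact_mod_cast congrArg (Nat.cast (R := ℝ)) (Nat.choose_succ_succ n j')
    push_cast at h1 h2 ⊢
    linear_combination (-1 : ℝ) * h1 - ((n : ℝ) + 1) * h2

/-- The number of `k`-element subtrees containing the root (i.e. `k`-element
sets of vertices containing the root and closed under taking parents) equals
`(r/((r-2)k+2))·C((r-1)k, k-1)`. -/
theorem count_rooted_subtrees (r k : ℕ) (hr : 3 ≤ r) (hk : 1 ≤ k) :
    (Nat.card {S : Finset (TreeVtx r) //
        S.card = k ∧ none ∈ S ∧ ∀ v ∈ S, treeParent r v ∈ S} : ℝ) =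
      (r : ℝ) / (((r : ℝ) - 2) * k + 2) *
        (Nat.choose ((r - 1) * k) (k - 1) : ℝ) := by
  obtain ⟨j, rfl⟩ : ∃ j, k = j + 1 := ⟨k - 1, by omega⟩
  obtain ⟨q, rfl⟩ : ∃ q, r = q + 1 := ⟨r - 1, by omega⟩
  have hq : 2 ≤ q := by omega
  have hq1 : q + 1 - 1 = q := by omega
  rw [tree_card (q+1) j hr]
  have hfor := fc_formula (p := q) (by omega) j (q+1) (by omega)
  rw [hq1, hfor]
  have en : q * j + (q + 1) = (q * (j + 1)) + 1 := by ring
  rw [en]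
  have hj1 : (j + 1) - 1 = j := by omega
  rw [hj1]
  obtain ⟨n, hn⟩ : ∃ n, n = q * (j + 1) := ⟨_, rfl⟩
  rw [← hn]
  have hnr : (n : ℝ) = q * ((j : ℝ) + 1) := by rw [hn]; push_cast; ring
  have habs := habsR n j
  have hD : (((q : ℝ) + 1) - 2) * ((j : ℝ) + 1) + 2 = (n : ℝ) + 1 - j := by
    rw [hnr]; ring
  have hDpos : (0 : ℝ) < (((q : ℝ) + 1) - 2) * ((j : ℝ) + 1) + 2 := by
    have h2q : (2 : ℝ) ≤ q := by exact_mod_cast hq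
    have h0j : (0 : ℝ) ≤ j := Nat.cast_nonneg j
    nlinarith
  have hn1 : (n : ℝ) + 1 ≠ 0 := by positivity
  have hcast : ((q * j + (q + 1) : ℕ) : ℝ) = (n : ℝ) + 1 := by
    rw [hnr]; push_cast; ring
  push_cast
  have hdL : (q : ℝ) * (j : ℝ) + ((q : ℝ) + 1) = (n : ℝ) + 1 := by rw [hnr]; ring
  rw [hdL, hD]
  have hD' : (n : ℝ) + 1 - (j : ℝ) ≠ 0 := by rw [← hD]; exact ne_of_gt hDpos
  rw [div_mul_eq_mul_div, div_eq_div_iff hn1 hD']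
  linear_combination (-((q : ℝ) + 1)) * habs
end
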